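/- For a history h of an iCGS M starting at s_I, if every infinite extension of the labelling trace of h satisfies LTL path formula ψ, then there exists a uniform joint strategy σ_Ag for the grand coalition whose unique compatible path from s_I has h as a prefix, and hence M, s_I ⊨ ⟪Ag⟫ψ. -/

import Mathlib

/-- Syntax of LTL formulas over atomic propositions `AP`. -/
inductive LTL (AP : Type) where
  | atom : AP → LTL AP
  | neg  : LTL AP → LTL AP
  | conj : LTL AP → LTL AP → LTL AP
  | next : LTL AP → LTL AP
  | untl : LTL AP → LTL AP → LTL AP

/-- Standard LTL semantics over infinite traces `ρ : ℕ → Set AP` (0-indexed). -/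
def LTL.Sat {AP : Type} : (ℕ → Set AP) → LTL AP → Prop
  | ρ, .atom q => q ∈ ρ 0
  | ρ, .neg ψ => ¬ LTL.Sat ρ ψ
  | ρ, .conj ψ ψ' => LTL.Sat ρ ψ ∧ LTL.Sat ρ ψ'
  | ρ, .next ψ => LTL.Sat (fun n => ρ (n + 1)) ψ
  | ρ, .untl ψ ψ' => ∃ k, LTL.Sat (fun n => ρ (n + k)) ψ' ∧
      ∀ j < k, LTL.Sat (fun n => ρ (n + j)) ψ

/-- Concatenation of a finite trace with an infinite trace. -/
def ext {AP : Type} (ρ : List (Set AP)) (ρ' : ℕ → Set AP) : ℕ → Set AP :=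
  fun n => if h : n < ρ.length then ρ.get ⟨n, h⟩ else ρ' (n - ρ.length)

/-- The three monitor verdicts. -/
inductive Verdict where
  | top | bot | unknown
deriving DecidableEq

-- The LTL monitor: ⊤ if all infinite extensions satisfy ψ, ⊥ if all violate ψ, ? otherwise.
open Classical in
noncomputable def Mon {AP : Type} (ψ : LTL AP) (ρ : List (Set AP)) : Verdict :=
  if ∀ ρ' : ℕ → Set AP, LTL.Sat (ext ρ ρ') ψ then Verdict.top
  else if ∀ ρ' : ℕ → Set AP, ¬ LTL.Sat (ext ρ ρ') ψ then Verdict.bot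
  else Verdict.unknown
/-- A concurrent game structure (with imperfect information), without bundled
well-formedness conditions. -/
structure CGS (Agt S AP Act : Type) where
  init : S
  indist : Agt → S → S → Prop
  protocol : Agt → S → Set Act
  trans : S → (Agt → Act) → S
  label : S → Set AP

/-- Well-formedness: protocols are nonempty and invariant under indistinguishability.
(The transition function is total by typing.) -/
def CGS.WellFormed {Agt S AP Act : Type} (M : CGS Agt S AP Act) : Prop :=
  (∀ i s, (M.protocol i s).Nonempty) ∧
  (∀ i s s', M.indist i s s' → M.protocol i s = M.protocol i s')

/-- Uniform strategy for agent `i`: returns enabled actions at the last state of a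
history, and agrees on (synchronously, pointwise) indistinguishable histories. -/
def CGS.UniformStrategy {Agt S AP Act : Type} (M : CGS Agt S AP Act) (i : Agt)
    (σ : List S → Act) : Prop :=
  (∀ (h : List S) (hne : h ≠ []), σ h ∈ M.protocol i (h.getLast hne)) ∧
  (∀ h h' : List S, List.Forall₂ (M.indist i) h h' → σ h = σ h')

/-- `out(s, σ_Γ)`: the σ_Γ-compatible infinite paths from `s`. -/
def CGS.outSet {Agt S AP Act : Type} (M : CGS Agt S AP Act) (Γ : Set Agt)
    (σ : Agt → List S → Act) (s : S) : Set (ℕ → S) :=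
  { p | p 0 = s ∧ ∀ j : ℕ, ∃ a : Agt → Act,
      (∀ i, a i ∈ M.protocol i (p j)) ∧
      (∀ i ∈ Γ, a i = σ i ((List.range (j + 1)).map p)) ∧
      p (j + 1) = M.trans (p j) a }

/-- `M, s ⊨ ⟪Γ⟫ψ` for an LTL path formula `ψ` read on labelling traces. -/
def CGS.SatATL {Agt S AP Act : Type} (M : CGS Agt S AP Act) (s : S) (Γ : Set Agt)
    (ψ : LTL AP) : Prop :=
  ∃ σ : Agt → List S → Act, (∀ i ∈ Γ, M.UniformStrategy i (σ i)) ∧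
    ∀ p ∈ M.outSet Γ σ s, LTL.Sat (fun n => M.label (p n)) ψ

/-- Infinite path of `M` from `s` (each step via some enabled joint action). -/
def CGS.IsPath {Agt S AP Act : Type} (M : CGS Agt S AP Act) (s : S) (p : ℕ → S) : Prop :=
  p 0 = s ∧ ∀ j : ℕ, ∃ a : Agt → Act,
    (∀ i, a i ∈ M.protocol i (p j)) ∧ p (j + 1) = M.trans (p j) a

/-- History: finite nonempty path of `M` starting at `s`. -/
def CGS.IsHistory {Agt S AP Act : Type} (M : CGS Agt S AP Act) (s : S) (h : List S) : Prop :=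
  h.head? = some s ∧ ∀ j : ℕ, (hj : j + 1 < h.length) → ∃ a : Agt → Act,
    (∀ i, a i ∈ M.protocol i (h.get ⟨j, Nat.lt_of_succ_lt hj⟩)) ∧
    h.get ⟨j + 1, hj⟩ = M.trans (h.get ⟨j, Nat.lt_of_succ_lt hj⟩) a

/-!
The grand coalition replays, step by step, the joint actions that generate the history `h`.
Since the transition function is deterministic, every path compatible with this strategy starts
with `h`, so its labelling trace is an infinite extension of that of `h` and satisfies `ψ`.
-/

theorem List.Forall₂.getLastD {α β : Type*} {R : α → β → Prop} {l₁ : List α} {l₂ : List β}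
    {a : α} {b : β} (h : List.Forall₂ R l₁ l₂) (hab : R a b) :
    R (l₁.getLastD a) (l₂.getLastD b) := by
  induction h generalizing a b with
  | nil => exact hab
  | cons hxy _ ih => simpa only [List.getLastD_cons] using ih hxy

theorem ext_drop_eq_self {AP : Type} {l : List (Set AP)} {ρ : ℕ → Set AP}
    (hl : ∀ (j : ℕ) (hj : j < l.length), ρ j = l[j]) :
    ext l (fun n => ρ (n + l.length)) = ρ := by
  funext n
  unfold ext
  split_ifs with hn
  · exact (hl n hn).symm
  · exact congrArg ρ (Nat.sub_add_cancel (Nat.le_of_not_lt hn))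

namespace CGS

variable {Agt S AP Act : Type} (M : CGS Agt S AP Act)

def ActionsAlong (h : List S) (A : ℕ → Agt → Act) : Prop :=
  ∀ (j : ℕ) (hj : j + 1 < h.length),
    (∀ i, A j i ∈ M.protocol i h[j]) ∧ h[j + 1] = M.trans h[j] (A j)

theorem IsHistory.exists_actionsAlong {M : CGS Agt S AP Act} {s : S} {h : List S}
    (hne : ∀ i s, (M.protocol i s).Nonempty) (hh : M.IsHistory s h) :
    ∃ A, M.ActionsAlong h A := by
  have : Nonempty (Agt → Act) := ⟨fun i => (hne i s).some⟩
  choose! A hA using hh.2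
  exact ⟨A, fun j hj => by simpa using hA j hj⟩

-- Both branches depend only on the length of the history and the protocol at its last state,
-- which is what makes the strategy uniform.
open Classical in
noncomputable def playOrDefault (hne : ∀ i s, (M.protocol i s).Nonempty) (A : ℕ → Agt → Act)
    (i : Agt) (hist : List S) : Act :=
  if A (hist.length - 1) i ∈ M.protocol i (hist.getLastD M.init) then A (hist.length - 1) i
  else (hne i (hist.getLastD M.init)).some

variable {M} (hne : ∀ i s, (M.protocol i s).Nonempty) (A : ℕ → Agt → Act) (i : Agt)

theorem playOrDefault_mem_protocol (hist : List S) :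
    M.playOrDefault hne A i hist ∈ M.protocol i (hist.getLastD M.init) := by
  unfold playOrDefault
  split_ifs with hA
  exacts [hA, Set.Nonempty.some_mem _]

theorem playOrDefault_congr {l₁ l₂ : List S} (hl : l₁.length = l₂.length)
    (hp : M.protocol i (l₁.getLastD M.init) = M.protocol i (l₂.getLastD M.init)) :
    M.playOrDefault hne A i l₁ = M.playOrDefault hne A i l₂ := by
  have some_congr : ∀ {X Y : Set Act} (hX : X.Nonempty) (hY : Y.Nonempty), X = Y →
      hX.some = hY.some := by
    rintro _ _ _ _ rfl; rfl
  unfold playOrDefault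
  rw [hl, some_congr (hne i _) (hne i _) hp, hp]

theorem uniformStrategy_playOrDefault (hwf : M.WellFormed) :
    M.UniformStrategy i (M.playOrDefault hwf.1 A i) := by
  refine ⟨fun hist hne => ?_, fun l₁ l₂ hl => ?_⟩
  · simpa [List.getLast?_eq_some_getLast hne] using playOrDefault_mem_protocol hwf.1 A i hist
  · refine playOrDefault_congr hwf.1 A i hl.length_eq ?_
    exact (hl.imp (hwf.2 i)).getLastD rfl

theorem outSet_univ_playOrDefault_prefix {s : S} {h : List S} (hhead : h.head? = some s)
    (hA : M.ActionsAlong h A) {p : ℕ → S}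
    (hp : p ∈ M.outSet Set.univ (M.playOrDefault hne A) s) :
    ∀ (j : ℕ) (hj : j < h.length), p j = h[j] := by
  intro j
  induction j with
  | zero =>
    intro hj
    rw [hp.1]
    simpa [List.head?_eq_getElem?, hj] using hhead.symm
  | succ j ih =>
    intro hj
    obtain ⟨a, -, ha, hstep⟩ := hp.2 j
    obtain ⟨hAj, hstepA⟩ := hA j hj
    have hpj := ih (by omega)
    have hlast : ((List.range (j + 1)).map p).getLastD M.init = h[j] := by
      simp [List.getLast?_range, hpj]
    have ha_eq : a = A j := funext fun i => by
      have hlen : (List.map p (List.range (j + 1))).length - 1 = j := by simp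
      rw [ha i trivial, playOrDefault, hlen, if_pos (hlast ▸ hAj i)]
    rw [hstep, ha_eq, hpj, hstepA]

end CGS

theorem stmt_10_general {Agt S AP Act : Type} (M : CGS Agt S AP Act) (hwf : M.WellFormed)
    (ψ : LTL AP) (h : List S)
    (hh : M.IsHistory M.init h)
    (hext : ∀ ρ' : ℕ → Set AP, LTL.Sat (ext (h.map M.label) ρ') ψ) :
    (∃ σ : Agt → List S → Act, (∀ i, M.UniformStrategy i (σ i)) ∧
      ∀ p ∈ M.outSet (Set.univ : Set Agt) σ M.init,
        ∀ (j : ℕ) (hj : j < h.length), p j = h.get ⟨j, hj⟩) ∧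
    M.SatATL M.init (Set.univ : Set Agt) ψ := by
  obtain ⟨A, hA⟩ := hh.exists_actionsAlong hwf.1
  set σ := M.playOrDefault hwf.1 A
  have huniform (i : Agt) : M.UniformStrategy i (σ i) :=
    CGS.uniformStrategy_playOrDefault A i hwf
  have hprefix (p) (hp : p ∈ M.outSet Set.univ σ M.init) (j : ℕ) (hj : j < h.length) :
      p j = h.get ⟨j, hj⟩ :=
    CGS.outSet_univ_playOrDefault_prefix hwf.1 A hh.1 hA hp j hj
  refine ⟨⟨σ, huniform, hprefix⟩, σ, fun i _ => huniform i, fun p hp => ?_⟩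
  have hlabel (j : ℕ) (hj : j < (h.map M.label).length) : M.label (p j) = (h.map M.label)[j] := by
    simp [hprefix p hp j (by simpa using hj)]
  exact ext_drop_eq_self hlabel ▸ hext _

/-- if every infinite extension of the labelling trace of a history h
satisfies ψ, then there is a uniform joint strategy for the grand coalition whose
compatible paths from s_I have h as a prefix, and hence M, s_I ⊨ ⟪Ag⟫ψ. -/
theorem stmt_10 {Agt S AP Act : Type} (M : CGS Agt S AP Act) (hwf : M.WellFormed)
    (heq : ∀ i, Equivalence (M.indist i)) (ψ : LTL AP) (h : List S)
    (hh : M.IsHistory M.init h)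
    (hext : ∀ ρ' : ℕ → Set AP, LTL.Sat (ext (h.map M.label) ρ') ψ) :
    (∃ σ : Agt → List S → Act, (∀ i, M.UniformStrategy i (σ i)) ∧
      ∀ p ∈ M.outSet (Set.univ : Set Agt) σ M.init,
        ∀ (j : ℕ) (hj : j < h.length), p j = h.get ⟨j, hj⟩) ∧
    M.SatATL M.init (Set.univ : Set Agt) ψ :=
  stmt_10_general M hwf ψ h hh hext
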